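/- If two monomials m, m̂ in the n-mode Weyl algebra with multi-degrees (α, β) and (α̂, β̂) commute, then βⱼα̂ⱼ = αⱼβ̂ⱼ for every j ∈ {1,…,n}. -/

import Mathlib

open scoped BigOperators

namespace WeylPaper

/-- Defining relations of the `n`-th Weyl algebra: generators `Sum.inl k` are the
annihilation operators `aₖ`, generators `Sum.inr k` are the creation operators `aₖ†`,
with `[aᵢ, aⱼ†] = δᵢⱼ` and all other commutators of generators vanishing. -/
inductive WeylRel (n : ℕ) :
    FreeAlgebra ℂ (Fin n ⊕ Fin n) → FreeAlgebra ℂ (Fin n ⊕ Fin n) → Prop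
  | ann_cre (i j : Fin n) :
      WeylRel n (FreeAlgebra.ι ℂ (Sum.inl i) * FreeAlgebra.ι ℂ (Sum.inr j))
        (FreeAlgebra.ι ℂ (Sum.inr j) * FreeAlgebra.ι ℂ (Sum.inl i) +
          if i = j then 1 else 0)
  | ann_ann (i j : Fin n) :
      WeylRel n (FreeAlgebra.ι ℂ (Sum.inl i) * FreeAlgebra.ι ℂ (Sum.inl j))
        (FreeAlgebra.ι ℂ (Sum.inl j) * FreeAlgebra.ι ℂ (Sum.inl i))
  | cre_cre (i j : Fin n) :
      WeylRel n (FreeAlgebra.ι ℂ (Sum.inr i) * FreeAlgebra.ι ℂ (Sum.inr j))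
        (FreeAlgebra.ι ℂ (Sum.inr j) * FreeAlgebra.ι ℂ (Sum.inr i))

/-- The `n`-th Weyl algebra `Aₙ`. -/
abbrev Weyl (n : ℕ) := RingQuot (WeylRel n)

/-- The annihilation operator `aₖ`. -/
noncomputable def ann {n : ℕ} (k : Fin n) : Weyl n :=
  RingQuot.mkAlgHom ℂ (WeylRel n) (FreeAlgebra.ι ℂ (Sum.inl k))

/-- The creation operator `aₖ†`. -/
noncomputable def cre {n : ℕ} (k : Fin n) : Weyl n :=
  RingQuot.mkAlgHom ℂ (WeylRel n) (FreeAlgebra.ι ℂ (Sum.inr k))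

/-- The commutator `[x, y] = xy - yx`. -/
def comm {n : ℕ} (x y : Weyl n) : Weyl n := x * y - y * x

/-- The normal-ordered monomial `a^{(α,β)} = ∏ⱼ (aⱼ†)^{αⱼ} · ∏ⱼ aⱼ^{βⱼ}`. -/
noncomputable def nom {n : ℕ} (α β : Fin n → ℕ) : Weyl n :=
  ((List.finRange n).map fun j => cre j ^ α j).prod *
  ((List.finRange n).map fun j => ann j ^ β j).prod

/-- `degLe x d` : `x` admits an expansion into normal-ordered monomials of degree
`|γ| = |α| + |β| ≤ d` (this is "deg(x) ≤ d"; it holds for `x = 0` and every `d`,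
matching `deg 0 = -∞`). -/
def degLe {n : ℕ} (x : Weyl n) (d : ℤ) : Prop :=
  ∃ c : ((Fin n → ℕ) × (Fin n → ℕ)) →₀ ℂ,
    x = c.sum (fun γ z => z • nom γ.1 γ.2) ∧
    ∀ γ ∈ c.support, ((∑ j, γ.1 j : ℕ) : ℤ) + ((∑ j, γ.2 j : ℕ) : ℤ) ≤ d

/-- `hasDeg x d` : `x` has degree exactly `d`. -/
def hasDeg {n : ℕ} (x : Weyl n) (d : ℤ) : Prop := degLe x d ∧ ¬ degLe x (d - 1)

/-- The generator corresponding to a letter. -/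
noncomputable def gen {n : ℕ} : (Fin n ⊕ Fin n) → Weyl n := Sum.elim ann cre

/-- The monomial (word in the generators `aₖ`, `aₖ†`) given by a list of letters. -/
noncomputable def word {n : ℕ} (w : List (Fin n ⊕ Fin n)) : Weyl n := (w.map gen).prod

/-- `α` : number of occurrences of `aⱼ†` in the word `w`. -/
def mdegC {n : ℕ} (w : List (Fin n ⊕ Fin n)) (j : Fin n) : ℕ := w.count (Sum.inr j)

/-- `β` : number of occurrences of `aⱼ` in the word `w`. -/
def mdegA {n : ℕ} (w : List (Fin n ⊕ Fin n)) (j : Fin n) : ℕ := w.count (Sum.inl j)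

/-- The basis element `g₊^{(α,β)} = i (a^{(β,α)} + a^{(α,β)})`. -/
noncomputable def gplus {n : ℕ} (α β : Fin n → ℕ) : Weyl n :=
  Complex.I • (nom β α + nom α β)

/-- The basis element `g₋^{(α,β)} = a^{(β,α)} - a^{(α,β)}`. -/
noncomputable def gminus {n : ℕ} (α β : Fin n → ℕ) : Weyl n :=
  nom β α - nom α β

/-- Type synonym for the opposite algebra, with ℂ acting through conjugation;
used to construct the adjoint `(·)†`. -/
def Conj (n : ℕ) : Type := (Weyl n)ᵐᵒᵖ

instance (n : ℕ) : Ring (Conj n) := inferInstanceAs (Ring (Weyl n)ᵐᵒᵖ)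

noncomputable instance (n : ℕ) : Algebra ℂ (Conj n) :=
  RingHom.toAlgebra' ((algebraMap ℂ (Weyl n)ᵐᵒᵖ).comp (starRingEnd ℂ))
    (fun c x =>
      Algebra.commutes (A := (Weyl n)ᵐᵒᵖ) (starRingEnd ℂ c) (show (Weyl n)ᵐᵒᵖ from x))

noncomputable def daggerAux (n : ℕ) : FreeAlgebra ℂ (Fin n ⊕ Fin n) →ₐ[ℂ] Conj n :=
  FreeAlgebra.lift ℂ fun s =>
    (MulOpposite.op (Sum.elim (fun k => cre k) (fun k => ann k) s : Weyl n) : Conj n)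

noncomputable def daggerHom (n : ℕ) : Weyl n →+* Conj n :=
  RingQuot.lift ⟨(daggerAux n).toRingHom, by
    have key : ∀ (x y : FreeAlgebra ℂ (Fin n ⊕ Fin n)), WeylRel n x y →
        RingQuot.mkAlgHom ℂ (WeylRel n) x = RingQuot.mkAlgHom ℂ (WeylRel n) y :=
      fun x y h => RingQuot.mkAlgHom_rel ℂ h
    intro x y h
    induction h with
    | ann_cre i j =>
        show (daggerAux n) _ = (daggerAux n) _
        by_cases hij : i = j
        · subst hij
          have hcomm : (ann i : Weyl n) * cre i = cre i * ann i + 1 := by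
            have hrel := key _ _ (WeylRel.ann_cre i i)
            rw [if_pos rfl] at hrel
            simpa [ann, cre] using hrel
          simp only [eq_self_iff_true, if_true, ite_true, map_mul, map_add, map_one, daggerAux,
            FreeAlgebra.lift_ι_apply, Sum.elim_inl, Sum.elim_inr]
          erw [FreeAlgebra.lift_ι_apply, FreeAlgebra.lift_ι_apply]
          calc (MulOpposite.op (cre i) : Conj n) * MulOpposite.op (ann i)
              = MulOpposite.op ((ann i : Weyl n) * cre i) := rfl
            _ = MulOpposite.op ((cre i : Weyl n) * ann i + 1) := by rw [hcomm]
            _ = MulOpposite.op (ann i) * MulOpposite.op (cre i) + 1 := rfl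
        · have hcomm : (ann j : Weyl n) * cre i = cre i * ann j := by
            have hrel := key _ _ (WeylRel.ann_cre j i)
            rw [if_neg (fun h => hij h.symm)] at hrel
            simpa [ann, cre] using hrel
          simp only [if_neg hij, map_mul, map_add, map_zero, add_zero, daggerAux,
            FreeAlgebra.lift_ι_apply, Sum.elim_inl, Sum.elim_inr]
          erw [FreeAlgebra.lift_ι_apply, FreeAlgebra.lift_ι_apply]
          calc (MulOpposite.op (cre i) : Conj n) * MulOpposite.op (ann j)
              = MulOpposite.op ((ann j : Weyl n) * cre i) := rfl
            _ = MulOpposite.op ((cre i : Weyl n) * ann j) := by rw [hcomm]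
            _ = MulOpposite.op (ann j) * MulOpposite.op (cre i) := rfl
    | ann_ann i j =>
        show (daggerAux n) _ = (daggerAux n) _
        have hcomm : (cre j : Weyl n) * cre i = cre i * cre j := by
          simpa [cre] using key _ _ (WeylRel.cre_cre j i)
        simp only [map_mul, daggerAux, FreeAlgebra.lift_ι_apply, Sum.elim_inl]
        erw [FreeAlgebra.lift_ι_apply, FreeAlgebra.lift_ι_apply]
        calc (MulOpposite.op (cre i) : Conj n) * MulOpposite.op (cre j)
            = MulOpposite.op ((cre j : Weyl n) * cre i) := rfl
          _ = MulOpposite.op ((cre i : Weyl n) * cre j) := by rw [hcomm]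
          _ = MulOpposite.op (cre j) * MulOpposite.op (cre i) := rfl
    | cre_cre i j =>
        show (daggerAux n) _ = (daggerAux n) _
        have hcomm : (ann j : Weyl n) * ann i = ann i * ann j := by
          simpa [ann] using key _ _ (WeylRel.ann_ann j i)
        simp only [map_mul, daggerAux, FreeAlgebra.lift_ι_apply, Sum.elim_inr]
        erw [FreeAlgebra.lift_ι_apply, FreeAlgebra.lift_ι_apply]
        calc (MulOpposite.op (ann i) : Conj n) * MulOpposite.op (ann j)
            = MulOpposite.op ((ann j : Weyl n) * ann i) := rfl
          _ = MulOpposite.op ((ann i : Weyl n) * ann j) := by rw [hcomm]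
          _ = MulOpposite.op (ann j) * MulOpposite.op (ann i) := rfl⟩

/-- The adjoint `(·)†` : the ℂ-antilinear anti-automorphism of the Weyl algebra
determined by `(aⱼ)† = aⱼ†` and `(aⱼ†)† = aⱼ`. -/
noncomputable def dagger {n : ℕ} (x : Weyl n) : Weyl n :=
  MulOpposite.unop (show (Weyl n)ᵐᵒᵖ from daggerHom n x)


/-! ### Auxiliary development for Statement 15 -/

section Statement15Aux
open Polynomial

noncomputable def eb {n : ℕ} (t : Fin n → ℤ) : (Fin n → ℤ) →₀ ℂ := Finsupp.single t 1

noncomputable def Aop {n : ℕ} (j : Fin n) : Module.End ℂ ((Fin n → ℤ) →₀ ℂ) :=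
  Finsupp.lsum ℂ (fun t => (t j : ℂ) • Finsupp.lsingle (t - Pi.single j 1))

noncomputable def Cop {n : ℕ} (j : Fin n) : Module.End ℂ ((Fin n → ℤ) →₀ ℂ) :=
  Finsupp.lsum ℂ (fun t => Finsupp.lsingle (t + Pi.single j 1))

lemma Aop_single {n : ℕ} (j : Fin n) (t : Fin n → ℤ) (b : ℂ) :
    Aop j (Finsupp.single t b) = (t j : ℂ) • Finsupp.single (t - Pi.single j 1) b := by
  simp [Aop, Finsupp.lsum_single]

lemma Cop_single {n : ℕ} (j : Fin n) (t : Fin n → ℤ) (b : ℂ) :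
    Cop j (Finsupp.single t b) = Finsupp.single (t + Pi.single j 1) b := by
  simp [Cop, Finsupp.lsum_single]

lemma AC_comm {n : ℕ} (i j : Fin n) :
    Aop (n := n) i * Cop j = Cop j * Aop i + (if i = j then 1 else 0) := by
  apply Finsupp.lhom_ext
  intro t b
  simp only [Module.End.mul_apply, LinearMap.add_apply, Aop_single, Cop_single, map_smul]
  by_cases hij : i = j
  · subst hij
    simp only [if_pos rfl, Module.End.one_apply]
    have h1 : t + Pi.single i 1 - Pi.single i 1 = t := by abel
    have h1' : t - Pi.single i 1 + Pi.single i 1 = t := by abel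
    have h2 : (((t + Pi.single i 1 : Fin n → ℤ)) i : ℂ) = (t i : ℂ) + 1 := by
      simp [Pi.add_apply, Pi.single_apply]
    rw [h1, h1', h2, add_smul, one_smul]
    simp
  · simp only [if_neg hij, LinearMap.zero_apply, add_zero]
    have h2 : (((t + Pi.single j 1 : Fin n → ℤ)) i : ℂ) = (t i : ℂ) := by
      simp [Pi.add_apply, Pi.single_apply, Ne.symm hij]
    have h3 : t + Pi.single j 1 - Pi.single i 1 = t - Pi.single i 1 + Pi.single j 1 := by abel
    rw [h2, h3]

lemma AA_comm {n : ℕ} (i j : Fin n) :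
    Aop (n := n) i * Aop j = Aop j * Aop i := by
  apply Finsupp.lhom_ext
  intro t b
  simp only [Module.End.mul_apply, Aop_single, map_smul]
  have h1 : (((t - Pi.single j 1 : Fin n → ℤ)) i : ℤ) = t i - (if i = j then 1 else 0) := by
    simp [Pi.sub_apply, Pi.single_apply]
  have h2 : (((t - Pi.single i 1 : Fin n → ℤ)) j : ℤ) = t j - (if j = i then 1 else 0) := by
    simp [Pi.sub_apply, Pi.single_apply]
  have h3 : t - Pi.single j 1 - Pi.single i 1 = t - Pi.single i 1 - Pi.single j 1 := by abel
  rw [h3, smul_smul, smul_smul]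
  congr 1
  rw [← Int.cast_mul, ← Int.cast_mul, h1, h2]
  by_cases hij : i = j
  · subst hij; push_cast; ring
  · rw [if_neg hij, if_neg (Ne.symm hij)]; push_cast; ring

lemma CC_comm {n : ℕ} (i j : Fin n) :
    Cop (n := n) i * Cop j = Cop j * Cop i := by
  apply Finsupp.lhom_ext
  intro t b
  simp only [Module.End.mul_apply, Cop_single]
  congr 1
  abel

/-- The representation of the Weyl algebra on the group algebra of `ℤⁿ`. -/
noncomputable def rep (n : ℕ) : Weyl n →ₐ[ℂ] Module.End ℂ ((Fin n → ℤ) →₀ ℂ) :=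
  RingQuot.liftAlgHom ℂ ⟨FreeAlgebra.lift ℂ (Sum.elim Aop Cop), by
    intro x y h
    induction h with
    | ann_cre i j =>
        simp only [map_mul, map_add, FreeAlgebra.lift_ι_apply, Sum.elim_inl, Sum.elim_inr]
        rw [show ((FreeAlgebra.lift ℂ (Sum.elim Aop Cop)) (if i = j then 1 else 0)
            : Module.End ℂ ((Fin n → ℤ) →₀ ℂ)) = (if i = j then 1 else 0) by
          split <;> simp]
        exact AC_comm i j
    | ann_ann i j =>
        simp only [map_mul, FreeAlgebra.lift_ι_apply, Sum.elim_inl]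
        exact AA_comm i j
    | cre_cre i j =>
        simp only [map_mul, FreeAlgebra.lift_ι_apply, Sum.elim_inr]
        exact CC_comm i j⟩

lemma rep_ann {n : ℕ} (j : Fin n) : rep n (ann j) = Aop j := by
  rw [ann, rep, RingQuot.liftAlgHom_mkAlgHom_apply, FreeAlgebra.lift_ι_apply, Sum.elim_inl]

lemma rep_cre {n : ℕ} (j : Fin n) : rep n (cre j) = Cop j := by
  rw [cre, rep, RingQuot.liftAlgHom_mkAlgHom_apply, FreeAlgebra.lift_ι_apply, Sum.elim_inr]

/-- Degree shift of a word: `dd w = α - β` coordinatewise. -/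
def dd {n : ℕ} : List (Fin n ⊕ Fin n) → (Fin n → ℤ)
  | [] => 0
  | (Sum.inl i) :: w => dd w - Pi.single i 1
  | (Sum.inr i) :: w => dd w + Pi.single i 1

/-- The multiset of shifts of the linear factors in coordinate `j` of the
coefficient function of a word. -/
def SS {n : ℕ} : List (Fin n ⊕ Fin n) → Fin n → Multiset ℤ
  | [] => fun _ => 0
  | (Sum.inl i) :: w => fun j => if j = i then dd w i ::ₘ SS w j else SS w j
  | (Sum.inr _) :: w => fun j => SS w j

def ev (m : ℤ) (T : Multiset ℤ) : ℤ := (T.map (fun s => m + s)).prod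

def cval {n : ℕ} (w : List (Fin n ⊕ Fin n)) (t : Fin n → ℤ) : ℤ :=
  ∏ j, ev (t j) (SS w j)

lemma word_cons {n : ℕ} (x : Fin n ⊕ Fin n) (w : List (Fin n ⊕ Fin n)) :
    word (x :: w) = gen x * word w := by
  simp [word]

lemma cval_cons_inl {n : ℕ} (i : Fin n) (w : List (Fin n ⊕ Fin n)) (t : Fin n → ℤ) :
    cval (Sum.inl i :: w) t = (t i + dd w i) * cval w t := by
  unfold cval
  have key : ∀ j, ev (t j) (SS (Sum.inl i :: w) j)
      = (if j = i then (t i + dd w i) else 1) * ev (t j) (SS w j) := by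
    intro j
    by_cases hj : j = i
    · subst hj; simp [SS, ev]
    · simp [SS, hj]
  rw [Finset.prod_congr rfl (fun j _ => key j), Finset.prod_mul_distrib]
  congr 1
  rw [Finset.prod_ite_eq' Finset.univ i (fun _ => t i + dd w i)]
  simp

lemma cval_cons_inr {n : ℕ} (i : Fin n) (w : List (Fin n ⊕ Fin n)) (t : Fin n → ℤ) :
    cval (Sum.inr i :: w) t = cval w t := rfl

lemma rep_word {n : ℕ} (w : List (Fin n ⊕ Fin n)) (t : Fin n → ℤ) :
    rep n (word w) (eb t) = (cval w t : ℂ) • eb (t + dd w) := by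
  induction w with
  | nil =>
      show rep n (word []) (eb t) = _
      rw [show (word [] : Weyl n) = 1 from rfl, map_one]
      simp [cval, ev, SS, dd, eb]
  | cons x w ih =>
      rw [word_cons, map_mul, Module.End.mul_apply, ih, map_smul]
      cases x with
      | inl i =>
          rw [show gen (Sum.inl i) = ann i from rfl, rep_ann, eb, Aop_single, cval_cons_inl]
          rw [smul_smul, ← Int.cast_mul]
          have h1 : (((t + dd w : Fin n → ℤ)) i : ℤ) = t i + dd w i := rfl
          have h2 : t + dd w - Pi.single i 1 = t + (dd w - Pi.single i 1) := by abel
          rw [h1, h2, mul_comm (cval w t)]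
          rfl
      | inr i =>
          rw [show gen (Sum.inr i) = cre i from rfl, rep_cre, eb, Cop_single, cval_cons_inr]
          have h2 : t + dd w + Pi.single i 1 = t + (dd w + Pi.single i 1) := by abel
          rw [h2]
          rfl

lemma key_identity {n : ℕ} (w w' : List (Fin n ⊕ Fin n))
    (h : comm (word w) (word w') = 0) (t : Fin n → ℤ) :
    cval w' t * cval w (t + dd w') = cval w t * cval w' (t + dd w) := by
  have h2 : word w * word w' = word w' * word w := by
    rwa [comm, sub_eq_zero] at h
  have h3 := congrArg (fun x => rep n x (eb t)) h2
  simp only [map_mul, Module.End.mul_apply, rep_word, map_smul, smul_smul] at h3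
  rw [show t + dd w' + dd w = t + dd w + dd w' by abel] at h3
  have h4 := congrArg (fun v : (Fin n → ℤ) →₀ ℂ => v (t + dd w + dd w')) h3
  simp only [eb, Finsupp.smul_single', mul_one, Finsupp.single_eq_same] at h4
  exact_mod_cast h4

noncomputable def linP (T : Multiset ℤ) : Polynomial ℤ := (T.map (fun s => X + C s)).prod

lemma linP_monic (T : Multiset ℤ) : (linP T).Monic :=
  monic_multiset_prod_of_monic T _ (fun s _ => monic_X_add_C s)

lemma linP_natDegree (T : Multiset ℤ) : (linP T).natDegree = Multiset.card T := by
  rw [linP, natDegree_multiset_prod_of_monic _ (fun f hf => by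
    obtain ⟨s, -, rfl⟩ := Multiset.mem_map.mp hf; exact monic_X_add_C s)]
  rw [Multiset.map_map,
    show (natDegree ∘ fun s : ℤ => X + C s) = fun _ => 1 from funext fun s => natDegree_X_add_C s]
  simp

lemma linP_nextCoeff (T : Multiset ℤ) : (linP T).nextCoeff = T.sum := by
  rw [linP, Polynomial.Monic.nextCoeff_multiset_prod T _ (fun s _ => monic_X_add_C s)]
  simp only [nextCoeff_X_add_C]
  simp [Multiset.map_id']

lemma linP_eval (m : ℤ) (T : Multiset ℤ) : (linP T).eval m = ev m T := by
  rw [linP, ev, Polynomial.eval_multiset_prod, Multiset.map_map]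
  congr 1
  apply Multiset.map_congr rfl
  intro s _
  simp

lemma ev_shift (m d : ℤ) (T : Multiset ℤ) :
    ev (m + d) T = ev m (T.map (fun s => d + s)) := by
  rw [ev, ev, Multiset.map_map]
  congr 1
  apply Multiset.map_congr rfl
  intro s _
  simp only [Function.comp_apply]
  ring

lemma sum_map_add_const (T : Multiset ℤ) (a : ℤ) :
    (T.map (fun s => a + s)).sum = (Multiset.card T : ℤ) * a + T.sum := by
  induction T using Multiset.induction with
  | empty => simp
  | cons x T ih => simp [ih]; ring

lemma coord {n : ℕ} (w w' : List (Fin n ⊕ Fin n))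
    (h : ∀ t : Fin n → ℤ, cval w' t * cval w (t + dd w') = cval w t * cval w' (t + dd w))
    (j : Fin n) :
    (Multiset.card (SS w j) : ℤ) * dd w' j = (Multiset.card (SS w' j) : ℤ) * dd w j := by
  classical
  set p : Polynomial ℤ := linP ((SS w j).map (fun s => dd w' j + s)) * linP (SS w' j) with hp
  set q : Polynomial ℤ := linP ((SS w' j).map (fun s => dd w j + s)) * linP (SS w j) with hq
  have hpm : p.Monic := (linP_monic _).mul (linP_monic _)
  have hqm : q.Monic := (linP_monic _).mul (linP_monic _)
  -- choose a good integer N for the other coordinates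
  set G : Polynomial ℤ := ∏ i ∈ Finset.univ.erase j,
      ((linP ((SS w i).map (fun s => dd w' i + s)) * linP (SS w' i)) *
       (linP ((SS w' i).map (fun s => dd w i + s)) * linP (SS w i))) with hG
  have hGm : G.Monic := by
    apply monic_prod_of_monic
    intro i _
    exact (((linP_monic _).mul (linP_monic _)).mul ((linP_monic _).mul (linP_monic _)))
  obtain ⟨N, hN⟩ : ∃ N : ℤ, G.eval N ≠ 0 := by
    by_contra hcon
    push_neg at hcon
    have : G = 0 := Polynomial.funext (fun r => by simp [hcon r])
    exact hGm.ne_zero this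
  set K : ℤ := ∏ i ∈ Finset.univ.erase j,
      (ev (N + dd w' i) (SS w i) * ev N (SS w' i)) with hK
  set K' : ℤ := ∏ i ∈ Finset.univ.erase j,
      (ev (N + dd w i) (SS w' i) * ev N (SS w i)) with hK'
  have hGev : G.eval N = K * K' := by
    rw [hG, Polynomial.eval_prod, hK, hK', ← Finset.prod_mul_distrib]
    apply Finset.prod_congr rfl
    intro i _
    simp only [Polynomial.eval_mul, linP_eval]
    rw [ev_shift N (dd w' i), ev_shift N (dd w i)]
  have hKne : K ≠ 0 := fun h0 => hN (by rw [hGev, h0, zero_mul])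
  have hK'ne : K' ≠ 0 := fun h0 => hN (by rw [hGev, h0, mul_zero])
  -- the pointwise identity in the variable of coordinate j
  have hpt : ∀ m : ℤ, K * p.eval m = K' * q.eval m := by
    intro m
    have ht := h (fun i => if i = j then m else N)
    set t : Fin n → ℤ := fun i => if i = j then m else N with htdef
    have expand : ∀ (u : List (Fin n ⊕ Fin n)) (δ : Fin n → ℤ),
        cval u (t + δ) = ev (m + δ j) (SS u j) *
          ∏ i ∈ Finset.univ.erase j, ev (N + δ i) (SS u i) := by
      intro u δ
      rw [cval, ← Finset.mul_prod_erase Finset.univ _ (Finset.mem_univ j)]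
      congr 1
      · congr 1
        simp [htdef]
      · apply Finset.prod_congr rfl
        intro i hi
        have hij : i ≠ j := (Finset.mem_erase.mp hi).1
        congr 2
        simp [htdef, hij]
    have expand0 : ∀ (u : List (Fin n ⊕ Fin n)),
        cval u t = ev m (SS u j) * ∏ i ∈ Finset.univ.erase j, ev N (SS u i) := by
      intro u
      have := expand u 0
      simpa using this
    rw [expand, expand, expand0, expand0] at ht
    have hevp : p.eval m = ev (m + dd w' j) (SS w j) * ev m (SS w' j) := by
      rw [hp, Polynomial.eval_mul, linP_eval, linP_eval, ev_shift m (dd w' j)]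
    have hevq : q.eval m = ev (m + dd w j) (SS w' j) * ev m (SS w j) := by
      rw [hq, Polynomial.eval_mul, linP_eval, linP_eval, ev_shift m (dd w j)]
    rw [hevp, hevq, hK, hK', Finset.prod_mul_distrib, Finset.prod_mul_distrib]
    linear_combination ht
  -- turn the pointwise identity into a polynomial identity
  have hpoly : (Polynomial.C K) * p = (Polynomial.C K') * q :=
    Polynomial.funext fun r => by
      simp only [Polynomial.eval_mul, Polynomial.eval_C]
      exact hpt r
  have hlc : K = K' := by
    have h1 := congrArg Polynomial.leadingCoeff hpoly
    rwa [Polynomial.leadingCoeff_mul_monic hpm, Polynomial.leadingCoeff_mul_monic hqm,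
      Polynomial.leadingCoeff_C, Polynomial.leadingCoeff_C] at h1
  have hCK : (Polynomial.C K : Polynomial ℤ) ≠ 0 := by
    simpa using hKne
  have hpq : p = q := mul_left_cancel₀ hCK (by rw [hpoly, hlc])
  have hnc := congrArg Polynomial.nextCoeff hpq
  rw [hp, hq, Polynomial.Monic.nextCoeff_mul (linP_monic _) (linP_monic _),
    Polynomial.Monic.nextCoeff_mul (linP_monic _) (linP_monic _),
    linP_nextCoeff, linP_nextCoeff, linP_nextCoeff, linP_nextCoeff,
    sum_map_add_const, sum_map_add_const] at hnc
  linarith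

lemma mdegA_cons {n : ℕ} (x : Fin n ⊕ Fin n) (w : List (Fin n ⊕ Fin n)) (j : Fin n) :
    mdegA (x :: w) j = mdegA w j + if x = Sum.inl j then 1 else 0 := by
  rw [show mdegA (x :: w) j = (x :: w).count (Sum.inl j) from rfl, List.count_cons]
  congr 1
  cases x with
  | inl i =>
      by_cases h : i = j
      · subst h
        rw [if_pos (show ((Sum.inl i : Fin n ⊕ Fin n) == Sum.inl i) = true from by
          show decide (i = i) = true; simp), if_pos rfl]
      · rw [if_neg (show ¬ ((Sum.inl i : Fin n ⊕ Fin n) == Sum.inl j) = true from by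
          show ¬ decide (i = j) = true; simp [h]),
          if_neg (fun hc => h (Sum.inl.inj hc))]
  | inr i =>
      rw [if_neg (show ¬ ((Sum.inr i : Fin n ⊕ Fin n) == Sum.inl j) = true from by
        rw [show ((Sum.inr i : Fin n ⊕ Fin n) == Sum.inl j) = false from rfl]; simp),
        if_neg (fun hc => nomatch hc)]

lemma mdegC_cons {n : ℕ} (x : Fin n ⊕ Fin n) (w : List (Fin n ⊕ Fin n)) (j : Fin n) :
    mdegC (x :: w) j = mdegC w j + if x = Sum.inr j then 1 else 0 := by
  rw [show mdegC (x :: w) j = (x :: w).count (Sum.inr j) from rfl, List.count_cons]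
  congr 1
  cases x with
  | inr i =>
      by_cases h : i = j
      · subst h
        rw [if_pos (show ((Sum.inr i : Fin n ⊕ Fin n) == Sum.inr i) = true from by
          show decide (i = i) = true; simp), if_pos rfl]
      · rw [if_neg (show ¬ ((Sum.inr i : Fin n ⊕ Fin n) == Sum.inr j) = true from by
          show ¬ decide (i = j) = true; simp [h]),
          if_neg (fun hc => h (Sum.inr.inj hc))]
  | inl i =>
      rw [if_neg (show ¬ ((Sum.inl i : Fin n ⊕ Fin n) == Sum.inr j) = true from by
        rw [show ((Sum.inl i : Fin n ⊕ Fin n) == Sum.inr j) = false from rfl]; simp),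
        if_neg (fun hc => nomatch hc)]

lemma card_SS {n : ℕ} (w : List (Fin n ⊕ Fin n)) (j : Fin n) :
    Multiset.card (SS w j) = mdegA w j := by
  induction w with
  | nil => rfl
  | cons x w ih =>
      cases x with
      | inl i =>
          by_cases hj : j = i
          · subst hj
            rw [show SS (Sum.inl j :: w) j = dd w j ::ₘ SS w j by simp [SS]]
            rw [mdegA_cons, if_pos rfl, Multiset.card_cons, ih]
          · rw [show SS (Sum.inl i :: w) j = SS w j by simp [SS, hj]]
            rw [mdegA_cons, if_neg (fun hcon => hj (Sum.inl.inj hcon).symm), ih, add_zero]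
      | inr i =>
          rw [show SS (Sum.inr i :: w) j = SS w j from rfl]
          rw [mdegA_cons, if_neg (fun hcon => nomatch hcon), ih, add_zero]

lemma dd_eq {n : ℕ} (w : List (Fin n ⊕ Fin n)) (j : Fin n) :
    dd w j = (mdegC w j : ℤ) - (mdegA w j : ℤ) := by
  induction w with
  | nil => simp [dd, mdegA, mdegC]
  | cons x w ih =>
      cases x with
      | inl i =>
          have h3 : mdegC (Sum.inl i :: w) j = mdegC w j := by
            rw [mdegC_cons, if_neg (fun h => nomatch h), add_zero]
          by_cases hj : j = i
          · subst hj
            have h1 : dd (Sum.inl j :: w) j = dd w j - 1 := by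
              rw [show dd (Sum.inl j :: w) = dd w - Pi.single j 1 from rfl, Pi.sub_apply,
                Pi.single_eq_same]
            have h2 : mdegA (Sum.inl j :: w) j = mdegA w j + 1 := by
              rw [mdegA_cons, if_pos rfl]
            rw [h1, h2, h3, ih]; push_cast; ring
          · have h1 : dd (Sum.inl i :: w) j = dd w j := by
              rw [show dd (Sum.inl i :: w) = dd w - Pi.single i 1 from rfl, Pi.sub_apply,
                Pi.single_eq_of_ne hj, sub_zero]
            have h2 : mdegA (Sum.inl i :: w) j = mdegA w j := by
              rw [mdegA_cons, if_neg (fun h => hj (Sum.inl.inj h).symm), add_zero]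
            rw [h1, h2, h3, ih]
      | inr i =>
          have h3 : mdegA (Sum.inr i :: w) j = mdegA w j := by
            rw [mdegA_cons, if_neg (fun h => nomatch h), add_zero]
          by_cases hj : j = i
          · subst hj
            have h1 : dd (Sum.inr j :: w) j = dd w j + 1 := by
              rw [show dd (Sum.inr j :: w) = dd w + Pi.single j 1 from rfl, Pi.add_apply,
                Pi.single_eq_same]
            have h2 : mdegC (Sum.inr j :: w) j = mdegC w j + 1 := by
              rw [mdegC_cons, if_pos rfl]
            rw [h1, h2, h3, ih]; push_cast; ring
          · have h1 : dd (Sum.inr i :: w) j = dd w j := by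
              rw [show dd (Sum.inr i :: w) = dd w + Pi.single i 1 from rfl, Pi.add_apply,
                Pi.single_eq_of_ne hj, add_zero]
            have h2 : mdegC (Sum.inr i :: w) j = mdegC w j := by
              rw [mdegC_cons, if_neg (fun h => hj (Sum.inr.inj h).symm), add_zero]
            rw [h1, h2, h3, ih]

end Statement15Aux


/-- If two monomials `m`, `m̂` in the `n`-mode Weyl algebra with
multi-degrees `(α, β)` and `(α̂, β̂)` commute, then `βⱼα̂ⱼ = αⱼβ̂ⱼ` for every `j`. -/
theorem statement15 {n : ℕ} (w w' : List (Fin n ⊕ Fin n))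
    (h : comm (word w) (word w') = 0) :
    ∀ j : Fin n, mdegA w j * mdegC w' j = mdegC w j * mdegA w' j := by
  intro j
  have hkey := key_identity w w' h
  have hc := coord w w' hkey j
  rw [card_SS, card_SS, dd_eq, dd_eq] at hc
  have hz : ((mdegA w j : ℤ)) * (mdegC w' j) = ((mdegC w j : ℤ)) * (mdegA w' j) := by
    linear_combination hc
  exact_mod_cast hz

end WeylPaper
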